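/- arXiv:0810.0368 — 3 statements merged into one kernel-verified Lean document; each statement's English description precedes it below -/
import Mathlib

section
/- The function F_p(z,w) = |Re(z−w)| / √(Im(z)·Im(w)) on the upper half-plane is invariant under the Möbius action of SL_2(ℝ) restricted to elements mapping the upper half-plane to itself, where z, w are treated as dual numbers; equivalently, for real a,b,c,d with ad−bc=1 and points (u,v), (u',v') with v,v'>0, the quantity |u−u'|/√(vv') is preserved under the dual-number Möbius map (u+εv) ↦ ((a(u+εv)+b)/(c(u+εv)+d)) with ε² = 0. -/
/-!
The Möbius map changes the difference of real parts by the factor `1 / ((c u₁ + d)(c u₂ + d))`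
(this is where `ad - bc = 1` enters), and the dual parts by `1 / (c uᵢ + d)²`, so the square root
of the product of dual parts changes by the absolute value of the same factor, which cancels.
-/

theorem mobius_sub_mobius {K : Type*} [Field K] {a b c d u₁ u₂ : K}
    (h₁ : c * u₁ + d ≠ 0) (h₂ : c * u₂ + d ≠ 0) :
    (a * u₁ + b) / (c * u₁ + d) - (a * u₂ + b) / (c * u₂ + d)
      = (a * d - b * c) * (u₁ - u₂) / ((c * u₁ + d) * (c * u₂ + d)) := by
  rw [div_sub_div _ _ h₁ h₂]
  ring

theorem Real.sqrt_div_sq_mul_div_sq (v₁ v₂ x y : ℝ) :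
    √(v₁ / x ^ 2 * (v₂ / y ^ 2)) = √(v₁ * v₂) / |x * y| := by
  rw [div_mul_div_comm, ← mul_pow, Real.sqrt_div' _ (sq_nonneg _), Real.sqrt_sq_eq_abs]

theorem parabolic_F_invariant_dual_general (a b c d : ℝ) (h : a * d - b * c = 1)
    (u₁ v₁ u₂ v₂ : ℝ)
    (h₁ : c * u₁ + d ≠ 0) (h₂ : c * u₂ + d ≠ 0) :
    |(a * u₁ + b) / (c * u₁ + d) - (a * u₂ + b) / (c * u₂ + d)| /
      Real.sqrt ((v₁ / (c * u₁ + d)^2) * (v₂ / (c * u₂ + d)^2))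
    = |u₁ - u₂| / Real.sqrt (v₁ * v₂) := by
  have hfactor : |(c * u₁ + d) * (c * u₂ + d)| ≠ 0 := abs_ne_zero.mpr (mul_ne_zero h₁ h₂)
  rw [mobius_sub_mobius h₁ h₂, h, one_mul, Real.sqrt_div_sq_mul_div_sq, abs_div,
    div_div_div_cancel_right₀ hfactor]

/-- The quantity `|u−u'|/√(v v')` on the dual-number upper half-plane is invariant
under the Möbius action `u+εv ↦ (au+b)/(cu+d) + ε·v/(cu+d)²` of SL₂(ℝ)
(defined when `cu+d ≠ 0`). -/
theorem parabolic_F_invariant_dual (a b c d : ℝ) (h : a * d - b * c = 1)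
    (u₁ v₁ u₂ v₂ : ℝ) (hv₁ : 0 < v₁) (hv₂ : 0 < v₂)
    (h₁ : c * u₁ + d ≠ 0) (h₂ : c * u₂ + d ≠ 0) :
    |(a * u₁ + b) / (c * u₁ + d) - (a * u₂ + b) / (c * u₂ + d)| /
      Real.sqrt ((v₁ / (c * u₁ + d)^2) * (v₂ / (c * u₂ + d)^2))
    = |u₁ - u₂| / Real.sqrt (v₁ * v₂) :=
  parabolic_F_invariant_dual_general a b c d h u₁ v₁ u₂ v₂ h₁ h₂
end

section
/- Let d(z,w) = h(|Re(z−w)|/√(Im z · Im w)) for a strictly monotonically increasing continuous h: [0,∞) → [0,∞) with h(0)=0. Fix w₁ = u₁+iv₁, w₂ = u₂+iv₂ with u₁ < u₂, and a curve γ: [u₁,u₂] → (0,∞) (the geodesic, with γ(u₁)=v₁, γ(u₂)=v₂) along which d is additive: d(w₁,w₂) = d(w₁, a+iγ(a)) + d(a+iγ(a), w₂) for all a ∈ (u₁,u₂). Then for any z = a+ib with u₁ < a < u₂: if b > γ(a) then d(w₁,z)+d(z,w₂) < d(w₁,w₂), and if b < γ(a) then d(w₁,z)+d(z,w₂) > d(w₁,w₂).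 -/
/-- The parabolic distance between points `(u,v)` built from a labelling function `h`. -/
noncomputable def pDist (h : ℝ → ℝ) (p q : ℝ × ℝ) : ℝ :=
  h (|p.1 - q.1| / Real.sqrt (p.2 * q.2))

/-- If an invariant distance `d = h ∘ F_p` is additive along a geodesic curve `γ` joining
`w₁` and `w₂`, then in the strip the geodesic separates the region where the triangle
inequality holds strictly from the one where its reverse holds strictly. -/
theorem strip_triangle_inequality (h : ℝ → ℝ)
    (hmono : StrictMonoOn h (Set.Ici 0)) (hcont : ContinuousOn h (Set.Ici 0))
    (h0 : h 0 = 0) (hnonneg : ∀ x ≥ (0:ℝ), 0 ≤ h x)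
    (u₁ v₁ u₂ v₂ : ℝ) (hu : u₁ < u₂) (hv₁ : 0 < v₁) (hv₂ : 0 < v₂)
    (γ : ℝ → ℝ) (hγpos : ∀ a ∈ Set.Icc u₁ u₂, 0 < γ a)
    (hγ₁ : γ u₁ = v₁) (hγ₂ : γ u₂ = v₂)
    (hadd : ∀ a ∈ Set.Ioo u₁ u₂,
      pDist h (u₁, v₁) (u₂, v₂) =
        pDist h (u₁, v₁) (a, γ a) + pDist h (a, γ a) (u₂, v₂)) :
    ∀ a b : ℝ, u₁ < a → a < u₂ → 0 < b →
      (γ a < b →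
        pDist h (u₁, v₁) (a, b) + pDist h (a, b) (u₂, v₂) <
          pDist h (u₁, v₁) (u₂, v₂)) ∧
      (b < γ a →
        pDist h (u₁, v₁) (u₂, v₂) <
          pDist h (u₁, v₁) (a, b) + pDist h (a, b) (u₂, v₂)) := by
  intro a b ha1 ha2 hb
  have hg : 0 < γ a := hγpos a ⟨ha1.le, ha2.le⟩
  have habs1 : 0 < |u₁ - a| := abs_pos.mpr (sub_ne_zero.mpr ha1.ne)
  have habs2 : 0 < |a - u₂| := abs_pos.mpr (sub_ne_zero.mpr ha2.ne)
  have key : ∀ x y : ℝ, 0 < x → x < y →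
      pDist h (u₁, v₁) (a, y) + pDist h (a, y) (u₂, v₂) <
        pDist h (u₁, v₁) (a, x) + pDist h (a, x) (u₂, v₂) := by
    intro x y hx hxy
    have hy : 0 < y := hx.trans hxy
    unfold pDist
    simp only
    apply add_lt_add
    · apply hmono (Set.mem_Ici.mpr (by positivity)) (Set.mem_Ici.mpr (by positivity))
      apply div_lt_div_of_pos_left habs1 (Real.sqrt_pos.mpr (by positivity))
      exact Real.sqrt_lt_sqrt (by positivity) (by nlinarith)
    · apply hmono (Set.mem_Ici.mpr (by positivity)) (Set.mem_Ici.mpr (by positivity))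
      apply div_lt_div_of_pos_left habs2 (Real.sqrt_pos.mpr (by positivity))
      exact Real.sqrt_lt_sqrt (by positivity) (by nlinarith)
  rw [hadd a ⟨ha1, ha2⟩]
  exact ⟨fun hgb => key (γ a) b hg hgb, fun hbg => key b (γ a) hb hbg⟩
end

section
/- Under the parabolic Cayley transform w ↦ (2w − i)/(iσ̆w + 2) in dual numbers (i² = 0), the inverse image computation shows that the invariant distance between two points u₁+iv₁ and u₂+iv₂ in the disc model is sin_σ̆^{-1}(2|u₂−u₁| / (2√((1+2v₁+σ̆u₁²)(1+2v₂+σ̆u₂²)))), where sin_σ̆^{-1} is arcsinh, doubling, or arcsin according as σ̆ = −1, 0, 1. In particular the expression |u₂−u₁|/√((1+2v₁+σ̆u₁²)(1+2v₂+σ̆u₂²)) is invariant under conjugates of SL_2(ℝ) Möbius maps by the Cayley transform. -/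
/-!
In coordinates the Cayley transform keeps the real part `U` and lowers the dual part to
`v = V - 1/2 - σ̆U²/2`, so that the disc weight `1 + 2v + σ̆u²` of the image is `2V`. Hence the
disc expression of two Cayley images is the half-plane expression `|U₂ - U₁| / (2√(V₁V₂))` of
their preimages, which gives the first claim. For the second, a Möbius map of determinant one
divides `U₂ - U₁` by `(cU₁ + d)(cU₂ + d)` and each `Vᵢ` by `(cUᵢ + d)²`, so it preserves the
half-plane expression.
-/

open TrivSqZeroExt in
/-- A dual number `u + εv`. -/
noncomputable def dpt (u v : ℝ) : DualNumber ℝ := inl u + inr v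

/-- The parabolic Cayley transform `w ↦ (2w − ε)/(εσ̆w + 2)` in dual numbers. -/
noncomputable def dCayley (σ : ℝ) (w : DualNumber ℝ) : DualNumber ℝ :=
  (2 * w - DualNumber.eps) * Ring.inverse (DualNumber.eps * TrivSqZeroExt.inl σ * w + 2)

/-- The inverse of the parabolic Cayley transform, `z ↦ (2z + ε)/(−εσ̆z + 2)`. -/
noncomputable def dCayleyInv (σ : ℝ) (z : DualNumber ℝ) : DualNumber ℝ :=
  (2 * z + DualNumber.eps) * Ring.inverse (-(DualNumber.eps * TrivSqZeroExt.inl σ * z) + 2)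

/-- The dual-number Möbius transformation associated with `[[a,b],[c,d]]`. -/
noncomputable def dMoebius (a b c d : ℝ) (w : DualNumber ℝ) : DualNumber ℝ :=
  (TrivSqZeroExt.inl a * w + TrivSqZeroExt.inl b) *
    Ring.inverse (TrivSqZeroExt.inl c * w + TrivSqZeroExt.inl d)

/-- `sin_σ̆⁻¹`: arcsinh, doubling, or arcsin according as `σ̆ = −1, 0, 1`. -/
noncomputable def sinInv (σ t : ℝ) : ℝ :=
  if σ = -1 then Real.arsinh t else if σ = 0 then 2 * t else Real.arcsin t

/-- The disc-model expression `|u₂−u₁|/√((1+2v₁+σ̆u₁²)(1+2v₂+σ̆u₂²))`. -/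
noncomputable def discExpr (σ u₁ v₁ u₂ v₂ : ℝ) : ℝ :=
  |u₂ - u₁| / Real.sqrt ((1 + 2*v₁ + σ*u₁^2) * (1 + 2*v₂ + σ*u₂^2))

namespace TrivSqZeroExt

section OfNat

variable {R M : Type*} [AddMonoidWithOne R] [AddMonoid M] (n : ℕ) [n.AtLeastTwo]

@[simp] theorem fst_ofNat : (ofNat(n) : TrivSqZeroExt R M).fst = ofNat(n) := fst_natCast n

@[simp] theorem snd_ofNat : (ofNat(n) : TrivSqZeroExt R M).snd = 0 := snd_natCast n

end OfNat

theorem ringInverse_eq_inv {R M : Type*} [DivisionRing R] [AddCommGroup M] [Module R M]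
    [Module Rᵐᵒᵖ M] [SMulCommClass R Rᵐᵒᵖ M] (x : TrivSqZeroExt R M) :
    Ring.inverse x = x⁻¹ := by
  by_cases hx : fst x = 0
  · have hx' : ¬IsUnit x := by simp [isUnit_iff_isUnit_fst, hx]
    rw [Ring.inverse_non_unit x hx']
    ext <;> simp [hx]
  · have hu : IsUnit x := isUnit_iff_isUnit_fst.mpr (isUnit_iff_ne_zero.mpr hx)
    rw [← one_mul (Ring.inverse x), eq_comm, Ring.eq_mul_inverse_iff_mul_eq _ _ _ hu]
    exact TrivSqZeroExt.inv_mul_cancel hx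

end TrivSqZeroExt

open TrivSqZeroExt DualNumber

namespace DualNumber

variable {K : Type*} [Field K]

theorem fst_mul_ringInverse (x y : DualNumber K) : fst (x * Ring.inverse y) = fst x / fst y := by
  simp [ringInverse_eq_inv, div_eq_mul_inv]

theorem snd_mul_ringInverse (x y : DualNumber K) :
    snd (x * Ring.inverse y) = (snd x * fst y - fst x * snd y) / fst y ^ 2 := by
  rw [ringInverse_eq_inv]
  simp only [DualNumber.snd_mul, fst_inv, snd_inv, smul_eq_mul, MulOpposite.smul_eq_mul_unop,
    MulOpposite.unop_op]
  obtain hy | hy := eq_or_ne (fst y) 0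
  · simp [hy]
  · field_simp
    ring

end DualNumber

@[simp] theorem fst_dpt (u v : ℝ) : fst (dpt u v) = u := by simp [dpt]
@[simp] theorem snd_dpt (u v : ℝ) : snd (dpt u v) = v := by simp [dpt]

theorem fst_dCayley (σ : ℝ) (w : DualNumber ℝ) : fst (dCayley σ w) = fst w := by
  rw [dCayley, fst_mul_ringInverse]
  simp

theorem snd_dCayley (σ : ℝ) (w : DualNumber ℝ) :
    snd (dCayley σ w) = snd w - 1 / 2 - σ * fst w ^ 2 / 2 := by
  rw [dCayley, snd_mul_ringInverse]
  simp only [fst_add, fst_sub, fst_mul, fst_inl, fst_eps, fst_ofNat, snd_add, snd_sub,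
    DualNumber.snd_mul, snd_inl, snd_eps, snd_ofNat]
  ring

theorem fst_dCayleyInv (σ : ℝ) (z : DualNumber ℝ) : fst (dCayleyInv σ z) = fst z := by
  rw [dCayleyInv, fst_mul_ringInverse]
  simp

theorem snd_dCayleyInv (σ : ℝ) (z : DualNumber ℝ) :
    snd (dCayleyInv σ z) = (1 + 2 * snd z + σ * fst z ^ 2) / 2 := by
  rw [dCayleyInv, snd_mul_ringInverse]
  simp only [fst_add, fst_neg, fst_mul, fst_inl, fst_eps, fst_ofNat, snd_add, snd_neg,
    DualNumber.snd_mul, snd_inl, snd_eps, snd_ofNat]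
  ring

theorem dCayley_dCayleyInv (σ : ℝ) (z : DualNumber ℝ) : dCayley σ (dCayleyInv σ z) = z := by
  ext
  · rw [fst_dCayley, fst_dCayleyInv]
  · rw [snd_dCayley, snd_dCayleyInv, fst_dCayleyInv]
    ring

theorem fst_dMoebius (a b c d : ℝ) (w : DualNumber ℝ) :
    fst (dMoebius a b c d w) = (a * fst w + b) / (c * fst w + d) := by
  rw [dMoebius, fst_mul_ringInverse]
  simp

theorem snd_dMoebius (a b c d : ℝ) (w : DualNumber ℝ) :
    snd (dMoebius a b c d w) = (a * d - b * c) * snd w / (c * fst w + d) ^ 2 := by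
  rw [dMoebius, snd_mul_ringInverse]
  simp only [fst_add, fst_mul, fst_inl, snd_add, DualNumber.snd_mul, snd_inl]
  ring

def discWeight (σ u v : ℝ) : ℝ := 1 + 2 * v + σ * u ^ 2

theorem discExpr_eq (σ u₁ v₁ u₂ v₂ : ℝ) :
    discExpr σ u₁ v₁ u₂ v₂ = |u₂ - u₁| / √(discWeight σ u₁ v₁ * discWeight σ u₂ v₂) := rfl

theorem discWeight_dCayley (σ : ℝ) (w : DualNumber ℝ) :
    discWeight σ (fst (dCayley σ w)) (snd (dCayley σ w)) = 2 * snd w := by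
  rw [discWeight, fst_dCayley, snd_dCayley]
  ring

noncomputable def halfPlaneExpr (U₁ V₁ U₂ V₂ : ℝ) : ℝ := |U₂ - U₁| / (2 * √(V₁ * V₂))

theorem discExpr_dCayley (σ : ℝ) (w₁ w₂ : DualNumber ℝ) :
    discExpr σ (fst (dCayley σ w₁)) (snd (dCayley σ w₁)) (fst (dCayley σ w₂))
      (snd (dCayley σ w₂)) = halfPlaneExpr (fst w₁) (snd w₁) (fst w₂) (snd w₂) := by
  have hsqrt : √(2 * snd w₁ * (2 * snd w₂)) = 2 * √(snd w₁ * snd w₂) := by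
    rw [show 2 * snd w₁ * (2 * snd w₂) = 2 ^ 2 * (snd w₁ * snd w₂) by ring,
      Real.sqrt_mul (sq_nonneg 2), Real.sqrt_sq zero_le_two]
  rw [discExpr_eq, discWeight_dCayley, discWeight_dCayley, fst_dCayley, fst_dCayley, hsqrt,
    halfPlaneExpr]

theorem halfPlaneExpr_moebius {a b c d U₁ V₁ U₂ V₂ : ℝ} (hdet : a * d - b * c = 1)
    (h₁ : c * U₁ + d ≠ 0) (h₂ : c * U₂ + d ≠ 0) :
    halfPlaneExpr ((a * U₁ + b) / (c * U₁ + d)) (V₁ / (c * U₁ + d) ^ 2)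
      ((a * U₂ + b) / (c * U₂ + d)) (V₂ / (c * U₂ + d) ^ 2) = halfPlaneExpr U₁ V₁ U₂ V₂ := by
  have hU : (a * U₂ + b) / (c * U₂ + d) - (a * U₁ + b) / (c * U₁ + d)
      = (U₂ - U₁) / ((c * U₁ + d) * (c * U₂ + d)) := by
    rw [div_sub_div _ _ h₂ h₁, mul_comm (c * U₂ + d) (c * U₁ + d)]
    congr 1
    linear_combination (U₂ - U₁) * hdet
  have hV : V₁ / (c * U₁ + d) ^ 2 * (V₂ / (c * U₂ + d) ^ 2)
      = V₁ * V₂ / ((c * U₁ + d) * (c * U₂ + d)) ^ 2 := by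
    rw [div_mul_div_comm, mul_pow]
  rw [halfPlaneExpr, halfPlaneExpr, hU, hV, Real.sqrt_div' _ (sq_nonneg _), Real.sqrt_sq_eq_abs,
    abs_div, mul_div_assoc', div_div_div_cancel_right₀ (abs_ne_zero.mpr (mul_ne_zero h₁ h₂))]

theorem halfPlaneExpr_dMoebius {a b c d : ℝ} (hdet : a * d - b * c = 1) {w₁ w₂ : DualNumber ℝ}
    (h₁ : IsUnit (inl c * w₁ + inl d)) (h₂ : IsUnit (inl c * w₂ + inl d)) :
    halfPlaneExpr (fst (dMoebius a b c d w₁)) (snd (dMoebius a b c d w₁))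
      (fst (dMoebius a b c d w₂)) (snd (dMoebius a b c d w₂))
      = halfPlaneExpr (fst w₁) (snd w₁) (fst w₂) (snd w₂) := by
  simp only [isUnit_iff_isUnit_fst, fst_add, fst_mul, fst_inl, isUnit_iff_ne_zero] at h₁ h₂
  simp only [fst_dMoebius, snd_dMoebius, hdet, one_mul]
  exact halfPlaneExpr_moebius hdet h₁ h₂

open TrivSqZeroExt in
theorem parabolic_cayley_distance_general (σ : ℝ) :
    (∀ U₁ V₁ U₂ V₂ u₁ v₁ u₂ v₂ : ℝ, 0 < V₁ → 0 < V₂ →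
      dCayley σ (dpt U₁ V₁) = dpt u₁ v₁ → dCayley σ (dpt U₂ V₂) = dpt u₂ v₂ →
      sinInv σ (|U₂ - U₁| / (2 * Real.sqrt (V₁ * V₂)))
        = sinInv σ (2 * |u₂ - u₁| /
            (2 * Real.sqrt ((1 + 2*v₁ + σ*u₁^2) * (1 + 2*v₂ + σ*u₂^2))))) ∧
    (∀ a b c d : ℝ, a * d - b * c = 1 → ∀ u₁ v₁ u₂ v₂ : ℝ,
      0 < 1 + 2*v₁ + σ*u₁^2 → 0 < 1 + 2*v₂ + σ*u₂^2 →
      IsUnit (inl c * dCayleyInv σ (dpt u₁ v₁) + (inl d : DualNumber ℝ)) →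
      IsUnit (inl c * dCayleyInv σ (dpt u₂ v₂) + (inl d : DualNumber ℝ)) →
      discExpr σ
        (fst (dCayley σ (dMoebius a b c d (dCayleyInv σ (dpt u₁ v₁)))))
        (snd (dCayley σ (dMoebius a b c d (dCayleyInv σ (dpt u₁ v₁)))))
        (fst (dCayley σ (dMoebius a b c d (dCayleyInv σ (dpt u₂ v₂)))))
        (snd (dCayley σ (dMoebius a b c d (dCayleyInv σ (dpt u₂ v₂)))))
      = discExpr σ u₁ v₁ u₂ v₂) := by
  refine ⟨fun U₁ V₁ U₂ V₂ u₁ v₁ u₂ v₂ _ _ h₁ h₂ => ?_,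
    fun a b c d hdet u₁ v₁ u₂ v₂ _ _ hu₁ hu₂ => ?_⟩
  · have hdisc := discExpr_dCayley σ (dpt U₁ V₁) (dpt U₂ V₂)
    simp only [h₁, h₂, fst_dpt, snd_dpt] at hdisc
    rw [mul_div_mul_left _ _ two_ne_zero]
    exact congrArg (sinInv σ) hdisc.symm
  · have hdisc := discExpr_dCayley σ (dCayleyInv σ (dpt u₁ v₁)) (dCayleyInv σ (dpt u₂ v₂))
    simp only [dCayley_dCayleyInv, fst_dpt, snd_dpt] at hdisc
    rw [discExpr_dCayley, halfPlaneExpr_dMoebius hdet hu₁ hu₂, hdisc]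

open TrivSqZeroExt in
/-- Under the parabolic Cayley transform, the half-plane invariant distance
`sin_σ̆⁻¹(|U₂−U₁|/(2√(V₁V₂)))` becomes
`sin_σ̆⁻¹(2|u₂−u₁|/(2√((1+2v₁+σ̆u₁²)(1+2v₂+σ̆u₂²))))` in the disc model; in particular
the expression `|u₂−u₁|/√((1+2v₁+σ̆u₁²)(1+2v₂+σ̆u₂²))` is invariant under conjugates of
SL₂(ℝ) Möbius maps by the Cayley transform. -/
theorem parabolic_cayley_distance (σ : ℝ) (hσ : σ = -1 ∨ σ = 0 ∨ σ = 1) :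
    (∀ U₁ V₁ U₂ V₂ u₁ v₁ u₂ v₂ : ℝ, 0 < V₁ → 0 < V₂ →
      dCayley σ (dpt U₁ V₁) = dpt u₁ v₁ → dCayley σ (dpt U₂ V₂) = dpt u₂ v₂ →
      sinInv σ (|U₂ - U₁| / (2 * Real.sqrt (V₁ * V₂)))
        = sinInv σ (2 * |u₂ - u₁| /
            (2 * Real.sqrt ((1 + 2*v₁ + σ*u₁^2) * (1 + 2*v₂ + σ*u₂^2))))) ∧
    (∀ a b c d : ℝ, a * d - b * c = 1 → ∀ u₁ v₁ u₂ v₂ : ℝ,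
      0 < 1 + 2*v₁ + σ*u₁^2 → 0 < 1 + 2*v₂ + σ*u₂^2 →
      IsUnit (inl c * dCayleyInv σ (dpt u₁ v₁) + (inl d : DualNumber ℝ)) →
      IsUnit (inl c * dCayleyInv σ (dpt u₂ v₂) + (inl d : DualNumber ℝ)) →
      discExpr σ
        (fst (dCayley σ (dMoebius a b c d (dCayleyInv σ (dpt u₁ v₁)))))
        (snd (dCayley σ (dMoebius a b c d (dCayleyInv σ (dpt u₁ v₁)))))
        (fst (dCayley σ (dMoebius a b c d (dCayleyInv σ (dpt u₂ v₂)))))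
        (snd (dCayley σ (dMoebius a b c d (dCayleyInv σ (dpt u₂ v₂)))))
      = discExpr σ u₁ v₁ u₂ v₂) :=
  parabolic_cayley_distance_general σ
end
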